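/- arXiv:2209.12700 — 2 statements merged into one kernel-verified Lean document; each statement's English description precedes it below -/
import Mathlib

section
/- Let G be a group, N a normal subgroup of G, and H a normal subgroup of G with H ≤ N. Suppose that H together with the commutator subgroup [N,N] generates N, i.e. H ⊔ [N,N] = N. Then for every i ≥ 0, the i-th derived subgroup of N is contained in the join of H with the (i+1)-st derived subgroup of N: D^(i)(N) ≤ H ⊔ D^(i+1)(N). Moreover, for all a_i, b_i ∈ D^(i)(N) there exist a_{i+1}, b_{i+1} ∈ D^(i+1)(N) and c_i, d_i ∈ H such that a_i = c_i·a_{i+1}, b_i = d_i·b_{i+1}, and [a_i, b_i] ≡ [a_{i+1}, b_{i+1}] mod H. -/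
open Pointwise


/-- The derived series of a subgroup `N` of `G`, computed as subgroups of `G`:
`D^(0)(N) = N` and `D^(n+1)(N) = [D^(n)(N), D^(n)(N)]`. -/
def derivedSeriesOf {G : Type*} [Group G] (N : Subgroup G) : ℕ → Subgroup G
  | 0 => N
  | n + 1 => ⁅derivedSeriesOf N n, derivedSeriesOf N n⁆

/-- The commutator `[x, y] = x⁻¹ y⁻¹ x y`. -/
def commutatorElem {G : Type*} [Group G] (x y : G) : G := x⁻¹ * y⁻¹ * x * y

lemma commutator_sup_le_sup_commutator {G : Type*} [Group G] (H K : Subgroup G)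
    [H.Normal] : ⁅H ⊔ K, H ⊔ K⁆ ≤ H ⊔ ⁅K, K⁆ := by
  set π := QuotientGroup.mk' H with hπ
  have hker : π.ker = H := QuotientGroup.ker_mk' H
  have hmapH : H.map π = ⊥ := by
    rw [Subgroup.map_eq_bot_iff, hker]
  have hcomap : H ⊔ ⁅K, K⁆ = (⁅K, K⁆.map π).comap π := by
    rw [Subgroup.comap_map_eq, hker, sup_comm]
  rw [hcomap, ← Subgroup.map_le_iff_le_comap, Subgroup.map_commutator,
      Subgroup.map_sup, hmapH, bot_sup_eq, Subgroup.map_commutator]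

/-- Key lemma: if `H ⊔ [N, N] = N`, then `D^(i)(N) ≤ H ⊔ D^(i+1)(N)` for all `i`;
moreover, any `a, b ∈ D^(i)(N)` decompose as `a = c·a'`, `b = d·b'` with
`a', b' ∈ D^(i+1)(N)` and `c, d ∈ H`, and `[a, b] ≡ [a', b']` modulo `H`. -/
theorem derivedSeriesOf_le_join_succ {G : Type*} [Group G] (N H : Subgroup G)
    [N.Normal] [H.Normal] (hHN : H ≤ N) (hgen : H ⊔ ⁅N, N⁆ = N) :
    (∀ i, derivedSeriesOf N i ≤ H ⊔ derivedSeriesOf N (i + 1)) ∧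
    (∀ i, ∀ a ∈ derivedSeriesOf N i, ∀ b ∈ derivedSeriesOf N i,
      ∃ a' ∈ derivedSeriesOf N (i + 1), ∃ b' ∈ derivedSeriesOf N (i + 1),
        ∃ c ∈ H, ∃ d ∈ H,
          a = c * a' ∧ b = d * b' ∧
          commutatorElem a b * (commutatorElem a' b')⁻¹ ∈ H) := by
  have part1 : ∀ i, derivedSeriesOf N i ≤ H ⊔ derivedSeriesOf N (i + 1) := by
    intro i
    induction i with
    | zero => exact le_of_eq hgen.symm
    | succ n ih =>
      calc derivedSeriesOf N (n + 1)
          = ⁅derivedSeriesOf N n, derivedSeriesOf N n⁆ := rfl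
        _ ≤ ⁅H ⊔ derivedSeriesOf N (n + 1), H ⊔ derivedSeriesOf N (n + 1)⁆ :=
            Subgroup.commutator_mono ih ih
        _ ≤ H ⊔ ⁅derivedSeriesOf N (n + 1), derivedSeriesOf N (n + 1)⁆ :=
            commutator_sup_le_sup_commutator _ _
        _ = H ⊔ derivedSeriesOf N (n + 2) := rfl
  refine ⟨part1, fun i a ha b hb => ?_⟩
  have ha' : a ∈ ((H : Set G) * (derivedSeriesOf N (i + 1) : Set G)) := by
    rw [← Subgroup.normal_mul]; exact part1 i ha
  have hb' : b ∈ ((H : Set G) * (derivedSeriesOf N (i + 1) : Set G)) := by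
    rw [← Subgroup.normal_mul]; exact part1 i hb
  obtain ⟨c, hc, a', ha'', rfl⟩ := ha'
  obtain ⟨d, hd, b', hb'', rfl⟩ := hb'
  refine ⟨a', ha'', b', hb'', c, hc, d, hd, rfl, rfl, ?_⟩
  have hker : (QuotientGroup.mk' H).ker = H := QuotientGroup.ker_mk' H
  rw [← hker, MonoidHom.mem_ker]
  have hc1 : (c : G ⧸ H) = 1 := (QuotientGroup.eq_one_iff c).mpr hc
  have hd1 : (d : G ⧸ H) = 1 := (QuotientGroup.eq_one_iff d).mpr hd
  simp only [commutatorElem, QuotientGroup.mk'_apply, QuotientGroup.mk_mul,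
    QuotientGroup.mk_inv, hc1, hd1, one_mul, mul_one, inv_one]
  group
end

section
/- Every free group is ω-solvable: for any type α, the intersection of all terms of the derived series of the free group on α is the trivial subgroup, ⋂_{n≥0} D^(n)(FreeGroup α) = {1}. (In particular, a free group of rank greater than one is ω-solvable but not solvable.) -/
open List Finset

namespace MagnusAux

variable {α : Type*}

/-- Formal series on adjacent-distinct words: the "Magnus" monoid. -/
@[ext] structure MS (α : Type*) where
  coef : List α → ℤ
  supp : ∀ l : List α, ¬ l.Chain' (· ≠ ·) → coef l = 0

open scoped Classical
open scoped commutatorElement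

noncomputable instance : Mul (MS α) :=
  ⟨fun f g =>
    ⟨fun l => if l.Chain' (· ≠ ·) then
        ∑ i ∈ Finset.range (l.length + 1), f.coef (l.take i) * g.coef (l.drop i) else 0,
      fun _ h => if_neg h⟩⟩

noncomputable instance : One (MS α) :=
  ⟨⟨fun l => if l = [] then 1 else 0,
    fun l h => if_neg (by rintro rfl; exact h List.isChain_nil)⟩⟩

lemma one_coef (l : List α) : (1 : MS α).coef l = if l = [] then 1 else 0 := rfl

lemma mul_coef_def (f g : MS α) (l : List α) :
    (f * g).coef l = if l.Chain' (· ≠ ·) then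
        ∑ i ∈ Finset.range (l.length + 1), f.coef (l.take i) * g.coef (l.drop i) else 0 := rfl

lemma mul_coef (f g : MS α) (l : List α) (h : l.Chain' (· ≠ ·)) :
    (f * g).coef l = ∑ i ∈ Finset.range (l.length + 1), f.coef (l.take i) * g.coef (l.drop i) := by
  rw [mul_coef_def, if_pos h]


lemma chain'_take {l : List α} (h : l.Chain' (· ≠ ·)) (i : ℕ) :
    (l.take i).Chain' (· ≠ ·) := h.take i

lemma chain'_drop {l : List α} (h : l.Chain' (· ≠ ·)) (i : ℕ) :
    (l.drop i).Chain' (· ≠ ·) := h.drop i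

noncomputable instance : Monoid (MS α) where
  one_mul f := by
    ext l
    by_cases h : l.Chain' (· ≠ ·)
    · rw [mul_coef _ _ _ h]
      rw [Finset.sum_eq_single_of_mem 0 (Finset.mem_range.2 (Nat.succ_pos _))]
      · simp [one_coef]
      · intro i hi hi0
        have : l.take i ≠ [] := by
          intro hnil
          rcases List.take_eq_nil_iff.1 hnil with rfl | rfl
          · exact hi0 rfl
          · simp at hi; omega
        simp [one_coef, this]
    · rw [(1 * f).supp l h, f.supp l h]
  mul_one f := by
    ext l
    by_cases h : l.Chain' (· ≠ ·)
    · rw [mul_coef _ _ _ h]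
      rw [Finset.sum_eq_single_of_mem l.length (Finset.mem_range.2 (Nat.lt_succ_self _))]
      · simp [one_coef]
      · intro i hi hi0
        have : l.drop i ≠ [] := by
          intro hnil
          have hle := List.drop_eq_nil_iff.1 hnil
          exact hi0 (le_antisymm (by simpa using Nat.lt_succ_iff.1 (Finset.mem_range.1 hi)) hle)
        simp [one_coef, this]
    · rw [(f * 1).supp l h, f.supp l h]
  mul_assoc f g h := by
    ext l
    by_cases hl : l.Chain' (· ≠ ·)
    · rw [mul_coef _ _ _ hl, mul_coef _ _ _ hl]
      have expand_left :
          ∑ j ∈ Finset.range (l.length + 1), (f * g).coef (l.take j) * h.coef (l.drop j)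
            = ∑ j ∈ Finset.range (l.length + 1), ∑ i ∈ Finset.range (j + 1),
                f.coef (l.take i) * g.coef ((l.drop i).take (j - i)) * h.coef (l.drop j) := by
        refine Finset.sum_congr rfl fun j hj => ?_
        have hj' : j ≤ l.length := Nat.lt_succ_iff.1 (Finset.mem_range.1 hj)
        rw [mul_coef _ _ _ (chain'_take hl j), Finset.sum_mul]
        rw [List.length_take, min_eq_left hj']
        refine Finset.sum_congr rfl fun i hi => ?_
        have hi' : i ≤ j := Nat.lt_succ_iff.1 (Finset.mem_range.1 hi)
        rw [List.take_take, min_eq_left hi', List.drop_take]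
      have expand_right :
          ∑ i ∈ Finset.range (l.length + 1), f.coef (l.take i) * (g * h).coef (l.drop i)
            = ∑ i ∈ Finset.range (l.length + 1), ∑ k ∈ Finset.range (l.length - i + 1),
                f.coef (l.take i) * ((g.coef ((l.drop i).take k)) * h.coef (l.drop (i + k))) := by
        refine Finset.sum_congr rfl fun i hi => ?_
        rw [mul_coef _ _ _ (chain'_drop hl i), Finset.mul_sum, List.length_drop]
        refine Finset.sum_congr rfl fun k hk => ?_
        rw [List.drop_drop]
      rw [expand_left, expand_right]
      -- reindex: (j, i) with i ≤ j  ↔  (i, k) with k = j - i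
      rw [Finset.sum_sigma', Finset.sum_sigma']
      refine Finset.sum_nbij' (fun p => ⟨p.2, p.1 - p.2⟩) (fun p => ⟨p.1 + p.2, p.1⟩) ?_ ?_ ?_ ?_ ?_
      · rintro ⟨j, i⟩ hp
        simp only [Finset.mem_sigma, Finset.mem_range] at hp ⊢
        omega
      · rintro ⟨i, k⟩ hp
        simp only [Finset.mem_sigma, Finset.mem_range] at hp ⊢
        omega
      · rintro ⟨j, i⟩ hp
        simp only [Finset.mem_sigma, Finset.mem_range] at hp
        have : i ≤ j := by omega
        simp [Nat.add_sub_cancel' this]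
      · rintro ⟨i, k⟩ hp
        simp
      · rintro ⟨j, i⟩ hp
        simp only [Finset.mem_sigma, Finset.mem_range] at hp
        have : i ≤ j := by omega
        rw [Nat.add_sub_cancel' this]
        ring
    · rw [(f * g * h).supp l hl, (f * (g * h)).supp l hl]


/-! ### Generators -/

noncomputable def E (a : α) (s : ℤ) : MS α :=
  ⟨fun l => if l = [] then 1 else if l = [a] then s else 0, by
    intro l h
    show (if l = [] then (1:ℤ) else if l = [a] then s else 0) = 0
    rw [if_neg, if_neg]
    · rintro rfl; exact h (List.isChain_singleton a)
    · rintro rfl; exact h List.isChain_nil⟩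

lemma E_coef (a : α) (s : ℤ) (l : List α) :
    (E a s).coef l = if l = [] then 1 else if l = [a] then s else 0 := rfl

lemma E_zero (a : α) : E a 0 = (1 : MS α) := by
  ext l
  rw [E_coef, one_coef]
  by_cases h : l = [] <;> simp [h]

lemma E_mul_E (a : α) (s t : ℤ) : E a s * E a t = E a (s + t) := by
  ext l
  by_cases hl : l.Chain' (· ≠ ·)
  · rw [mul_coef _ _ _ hl, E_coef]
    match l with
    | [] => simp [E_coef]
    | [x] =>
      simp only [List.length_cons, List.length_nil, zero_add]
      rw [show (1:ℕ) + 1 = 2 from rfl, Finset.sum_range_succ, Finset.sum_range_one]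
      simp only [List.take_zero, List.drop_zero, List.take_succ_cons, List.take_nil,
        List.drop_succ_cons, List.drop_nil, E_coef]
      by_cases hx : x = a <;> simp [hx] <;> ring
    | x :: y :: t =>
      rw [if_neg (by simp), if_neg (by simp)]
      refine Finset.sum_eq_zero fun i hi => ?_
      match i with
      | 0 => simp [E_coef]
      | 1 =>
        simp only [List.take_succ_cons, List.take_zero, List.drop_succ_cons, List.drop_zero,
          E_coef]
        rcases List.isChain_cons_cons.1 hl with ⟨hxy, -⟩
        by_cases hx : x = a
        · subst hx
          simp [Ne.symm hxy]
        · simp [hx]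
      | (i + 2) =>
        have : (E a s).coef ((x :: y :: t).take (i + 2)) = 0 := by
          rw [List.take_succ_cons, List.take_succ_cons, E_coef]
          rw [if_neg (by simp), if_neg (by simp)]
        rw [this, zero_mul]
  · rw [(E a s * E a t).supp l hl, (E a (s + t)).supp l hl]

/-- The unit `1 + s·X_a` for `s = ±1`. -/
noncomputable def U (a : α) : (MS α)ˣ :=
  ⟨E a 1, E a (-1), by rw [E_mul_E]; norm_num [E_zero], by rw [E_mul_E]; norm_num [E_zero]⟩

lemma U_inv_val (a : α) : ((U a)⁻¹ : (MS α)ˣ).val = E a (-1) := rfl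

/-! ### The expansion lemma for products with a generator -/

lemma coef_nil_mul (f g : MS α) : (f * g).coef [] = f.coef [] * g.coef [] := by
  rw [mul_coef _ _ _ List.isChain_nil]
  simp

lemma E_mul_coef_cons (a : α) (s : ℤ) (Q : MS α) (x : α) (m : List α)
    (hl : (x :: m).Chain' (· ≠ ·)) :
    (E a s * Q).coef (x :: m) = Q.coef (x :: m) + (if x = a then s * Q.coef m else 0) := by
  rw [mul_coef _ _ _ hl]
  have hlen : (x :: m).length + 1 = m.length + 2 := by simp
  rw [hlen, Finset.sum_range_succ', Finset.sum_range_succ']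
  have hzero : ∀ i ∈ Finset.range m.length,
      (E a s).coef ((x :: m).take (i + 1 + 1)) * Q.coef ((x :: m).drop (i + 1 + 1)) = 0 := by
    intro i hi
    have hne : m.take (i + 1) ≠ [] := by
      intro hnil
      rcases List.take_eq_nil_iff.1 hnil with h | rfl
      · omega
      · simp at hi
    rw [List.take_succ_cons, E_coef, if_neg (by simp), if_neg, zero_mul]
    intro h
    rcases List.cons_eq_cons.1 h with ⟨rfl, h2⟩
    exact hne h2
  rw [Finset.sum_eq_zero hzero]
  simp only [List.take_succ_cons, List.take_zero, List.drop_succ_cons, List.drop_zero, E_coef]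
  by_cases hx : x = a
  · subst hx; simp; ring
  · simp [hx]

/-! ### The filtration -/

/-- `Req m f g` : the coefficients of `f` and `g` agree on words of length `< m`. -/
def Req (m : ℕ) (f g : MS α) : Prop := ∀ l : List α, l.length < m → f.coef l = g.coef l

lemma Req.refl (m : ℕ) (f : MS α) : Req m f f := fun _ _ => rfl

lemma Req.mul {m : ℕ} {f f' g g' : MS α} (hf : Req m f f') (hg : Req m g g') :
    Req m (f * g) (f' * g') := by
  intro l hlm
  by_cases hl : l.Chain' (· ≠ ·)
  · rw [mul_coef _ _ _ hl, mul_coef _ _ _ hl]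
    refine Finset.sum_congr rfl fun i hi => ?_
    rw [hf _ (lt_of_le_of_lt (by simpa using List.length_take_le i l) hlm),
      hg _ (lt_of_le_of_lt (by simpa using List.length_drop_le i l) hlm)]
  · rw [(f * g).supp l hl, (f' * g').supp l hl]

lemma req_one_mul {k : ℕ} {u v : MS α} (hu : Req k u 1) (hv : Req k v 1) {l : List α}
    (hl : l.Chain' (· ≠ ·)) (hlen : l.length < k + 1) (hne : l ≠ []) (hk : 1 ≤ k) :
    (u * v).coef l = u.coef l + v.coef l := by
  rw [mul_coef _ _ _ hl]
  obtain ⟨n, hn⟩ : ∃ n, l.length = n + 1 := ⟨l.length - 1, by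
    have : l.length ≠ 0 := by simpa using hne
    omega⟩
  rw [hn, Finset.sum_range_succ, Finset.sum_range_succ']
  have hzero : ∀ i ∈ Finset.range n, u.coef (l.take (i + 1)) * v.coef (l.drop (i + 1)) = 0 := by
    intro i hi
    simp only [Finset.mem_range] at hi
    have h1 : (l.take (i + 1)).length < k := by
      rw [List.length_take]; omega
    rw [hu _ h1, one_coef, if_neg, zero_mul]
    intro hnil
    rcases List.take_eq_nil_iff.1 hnil with h | h
    · omega
    · exact hne h
  rw [Finset.sum_eq_zero hzero]
  have hl1 : l.take (n + 1) = l := by rw [← hn, List.take_length]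
  have hl2 : l.drop (n + 1) = [] := by rw [← hn, List.drop_length]
  have hu0 : u.coef [] = 1 := by
    rw [hu _ (by simp; omega), one_coef, if_pos rfl]
  have hv0 : v.coef [] = 1 := by
    rw [hv _ (by simp; omega), one_coef, if_pos rfl]
  simp only [List.take_zero, List.drop_zero, hl1, hl2, hu0, hv0]
  ring


lemma req_inv {k : ℕ} (u : (MS α)ˣ) (hu : Req k u.val 1) : Req k (↑u⁻¹ : MS α) 1 := by
  intro l hlk
  by_cases hl : l.Chain' (· ≠ ·)
  · rcases eq_or_ne l [] with rfl | hne
    · have h1 : ((↑u⁻¹ * ↑u : MS α)).coef [] = 1 := by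
        rw [u.inv_mul]; rfl
      rw [coef_nil_mul] at h1
      have h2 : u.val.coef [] = 1 := by
        rw [hu _ (by simpa using hlk), one_coef, if_pos rfl]
      rw [h2, mul_one] at h1
      rw [h1, one_coef, if_pos rfl]
    · have h1 : ((↑u⁻¹ * ↑u : MS α)).coef l = 0 := by
        rw [u.inv_mul, one_coef, if_neg hne]
      rw [mul_coef _ _ _ hl, Finset.sum_range_succ] at h1
      have hzero : ∀ i ∈ Finset.range l.length,
          (↑u⁻¹ : MS α).coef (l.take i) * u.val.coef (l.drop i) = 0 := by
        intro i hi
        simp only [Finset.mem_range] at hi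
        have hdlen : (l.drop i).length < k := by
          rw [List.length_drop]; omega
        rw [hu _ hdlen, one_coef, if_neg, mul_zero]
        intro hnil
        have := List.drop_eq_nil_iff.1 hnil
        omega
      rw [Finset.sum_eq_zero hzero, List.take_length, List.drop_length, zero_add] at h1
      have h2 : u.val.coef [] = 1 := by
        have hne' : l.length ≠ 0 := by simpa using hne
        rw [hu _ (by simp only [List.length_nil]; omega), one_coef, if_pos rfl]
      rw [h2, mul_one] at h1
      rw [h1, one_coef, if_neg hne]
  · rw [(↑u⁻¹ : MS α).supp l hl, (1 : MS α).supp l hl]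

/-- The subgroup of units congruent to `1` below length `k`. -/
noncomputable def K (k : ℕ) : Subgroup (MS α)ˣ where
  carrier := {u | Req k u.val 1}
  one_mem' := fun _ _ => rfl
  mul_mem' := by
    intro u v hu hv
    have := Req.mul hu hv
    rwa [one_mul] at this
  inv_mem' := by
    intro u hu
    exact req_inv u hu

lemma mem_K {k : ℕ} {u : (MS α)ˣ} : u ∈ (K k : Subgroup (MS α)ˣ) ↔ Req k u.val 1 := Iff.rfl

lemma commutator_mem_K {k : ℕ} {u v : (MS α)ˣ} (hu : u ∈ (K k : Subgroup (MS α)ˣ))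
    (hv : v ∈ K k) : ⁅u, v⁆ ∈ (K (k + 1) : Subgroup (MS α)ˣ) := by
  rw [mem_K] at hu hv ⊢
  have hval : (⁅u, v⁆ : (MS α)ˣ).val = ((u * v) * ((v * u)⁻¹ : (MS α)ˣ).val : MS α) := by
    rw [commutatorElement_def]
    have : u * v * u⁻¹ * v⁻¹ = (u * v) * (v * u)⁻¹ := by group
    rw [this]
    rfl
  rcases Nat.eq_zero_or_pos k with rfl | hk
  · -- length-zero case: the coefficient at `[]` is multiplicative
    intro l hl
    interval_cases hlen : l.length
    · rw [List.length_eq_zero_iff.1 hlen]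
      rw [hval, coef_nil_mul, coef_nil_mul, one_coef, if_pos rfl]
      have h1 : u.val.coef [] * (↑u⁻¹ : MS α).coef [] = 1 := by
        rw [← coef_nil_mul, u.mul_inv]; rfl
      have h2 : v.val.coef [] * (↑v⁻¹ : MS α).coef [] = 1 := by
        rw [← coef_nil_mul, v.mul_inv]; rfl
      have h3 : (v * u).val.coef [] * (↑(v * u)⁻¹ : MS α).coef [] = 1 := by
        rw [← coef_nil_mul, (v * u).mul_inv]; rfl
      have h4 : (v * u).val.coef [] = v.val.coef [] * u.val.coef [] := by
        rw [Units.val_mul, coef_nil_mul]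
      have h5 : (u * v).val.coef [] = u.val.coef [] * v.val.coef [] := by
        rw [Units.val_mul, coef_nil_mul]
      rw [h4] at h3
      linear_combination h3
  · -- main case: uv ≡ vu below k+1
    have hcomm : Req (k + 1) ((u * v : (MS α)ˣ) : MS α) ((v * u : (MS α)ˣ) : MS α) := by
      intro l hl
      rcases eq_or_ne l [] with rfl | hne
      · rw [Units.val_mul, Units.val_mul, coef_nil_mul, coef_nil_mul]
        ring
      · by_cases hch : l.Chain' (· ≠ ·)
        · rw [Units.val_mul, Units.val_mul,
            req_one_mul hu hv hch hl hne hk, req_one_mul hv hu hch hl hne hk]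
          ring
        · rw [Units.val_mul, Units.val_mul, (u.val * v.val).supp l hch,
            (v.val * u.val).supp l hch]
    have : Req (k + 1) (⁅u, v⁆ : (MS α)ˣ).val (((v * u : (MS α)ˣ) : MS α) * ((v * u)⁻¹ : (MS α)ˣ).val) := by
      rw [hval]
      exact Req.mul hcomm (Req.refl _ _)
    intro l hl
    rw [this l hl, ← Units.val_mul, mul_inv_cancel, Units.val_one]

/-- Derived series of the unit group lands in the filtration. -/
lemma derivedSeries_le_K (n : ℕ) :
    derivedSeries (MS α)ˣ n ≤ K n := by
  induction n with
  | zero => exact fun u _ l hl => absurd hl (Nat.not_lt_zero _)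
  | succ n ih =>
    rw [derivedSeries_succ]
    rw [Subgroup.commutator_le]
    intro u hu v hv
    exact commutator_mem_K (ih hu) (ih hv)


/-! ### Words and the leading monomial -/

def sg (b : Bool) : ℤ := if b then 1 else -1

lemma sg_ne_zero (b : Bool) : sg b ≠ 0 := by cases b <;> simp [sg]

/-- The product of generators corresponding to a word. -/
noncomputable def P (L : List (α × Bool)) : MS α :=
  (L.map fun p => E p.1 (sg p.2)).prod

lemma P_nil : P ([] : List (α × Bool)) = 1 := rfl

lemma P_cons (p : α × Bool) (L : List (α × Bool)) :
    P (p :: L) = E p.1 (sg p.2) * P L := by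
  simp [P]

/-- Reduced words: no adjacent cancelling pair. -/
def Rw (L : List (α × Bool)) : Prop := L.Chain' (fun p q => p.1 = q.1 → p.2 = q.2)

/-- The leading monomial of a word: its letters with adjacent duplicates collapsed. -/
noncomputable def mL : List (α × Bool) → List α
  | [] => []
  | (a, _) :: r => (r.map Prod.fst).destutter' (· ≠ ·) a

lemma mL_nil : mL ([] : List (α × Bool)) = [] := rfl

lemma mL_cons (a : α) (e : Bool) (r : List (α × Bool)) :
    mL ((a, e) :: r) = (r.map Prod.fst).destutter' (· ≠ ·) a := rfl

lemma destutter'_head : ∀ (l : List α) (a : α),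
    ∃ t, l.destutter' (· ≠ ·) a = a :: t ∧ (a :: t).Chain' (· ≠ ·)
  | [], a => ⟨[], rfl, List.isChain_singleton a⟩
  | b :: l, a => by
    by_cases hab : a ≠ b
    · obtain ⟨t, ht, -⟩ := destutter'_head l b
      refine ⟨l.destutter' (· ≠ ·) b, by rw [List.destutter'_cons_pos _ hab], ?_⟩
      have := List.isChain_destutter' (R := (· ≠ ·)) (b :: l) a
      rwa [List.destutter'_cons_pos _ hab] at this
    · obtain ⟨t, ht, hch⟩ := destutter'_head l a
      refine ⟨t, ?_, hch⟩
      rw [List.destutter'_cons_neg _ hab, ht]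

lemma mL_cons_cons_ne (a : α) (e : Bool) (b : α) (e' : Bool) (r : List (α × Bool))
    (hab : a ≠ b) : mL ((a, e) :: (b, e') :: r) = a :: mL ((b, e') :: r) := by
  rw [mL_cons, mL_cons, List.map_cons, List.destutter'_cons_pos _ hab]

lemma mL_cons_cons_eq (a : α) (e : Bool) (e' : Bool) (r : List (α × Bool)) :
    mL ((a, e) :: (a, e') :: r) = mL ((a, e') :: r) := by
  rw [mL_cons, mL_cons, List.map_cons, List.destutter'_cons_neg]
  simp

/-- Key vanishing lemma: prefixing the leading monomial by anything not ending in the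
first letter gives a vanishing coefficient. -/
lemma Zstar : ∀ (L : List (α × Bool)), Rw L → ∀ (p : List α) (hp : p ≠ []),
    (∀ q ∈ L.head?, p.getLast hp ≠ q.1) → (P L).coef (p ++ mL L) = 0 := by
  intro L
  induction L with
  | nil =>
    intro _ p hp _
    rw [mL_nil, List.append_nil, P_nil, one_coef, if_neg hp]
  | cons hd r ih =>
    intro hL p hp hlast
    obtain ⟨a, e⟩ := hd
    obtain ⟨hrel, hr⟩ := List.isChain_cons.1 hL
    have hlast' : p.getLast hp ≠ a := hlast (a, e) rfl
    by_cases hM : ((p ++ mL ((a, e) :: r)).Chain' (· ≠ ·))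
    · obtain ⟨x, p', rfl⟩ := List.exists_cons_of_ne_nil hp
      rw [P_cons]
      rw [List.cons_append] at hM ⊢
      rw [E_mul_coef_cons _ _ _ _ _ hM]
      match r with
      | [] =>
        rw [mL_cons]
        simp only [List.map_nil, List.destutter'_nil, P_nil, one_coef]
        simp
      | (b, e') :: r' =>
        by_cases hab : a = b
        · subst hab
          rw [mL_cons_cons_eq]
          have h1 := ih hr (x :: p') (by simp) (by
            intro q hq
            simp only [List.head?_cons, Option.mem_def, Option.some.injEq] at hq
            subst hq
            exact hlast')
          simp only [List.cons_append] at h1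
          rw [h1]
          by_cases hx : x = a
          · have hp' : p' ≠ [] := by
              rintro rfl
              exact hlast' (by simp [hx])
            have h2 := ih hr p' hp' (by
              intro q hq
              simp only [List.head?_cons, Option.mem_def, Option.some.injEq] at hq
              subst hq
              have hgl : (x :: p').getLast (by simp) = p'.getLast hp' := List.getLast_cons hp'
              rw [hgl] at hlast'
              exact hlast')
            rw [if_pos hx, h2, mul_zero]
            simp
          · rw [if_neg hx]
            simp
        · rw [mL_cons_cons_ne _ _ _ _ _ hab]
          have h1 := ih hr (x :: p' ++ [a]) (by simp) (by
            intro q hq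
            simp only [List.head?_cons, Option.mem_def, Option.some.injEq] at hq
            subst hq
            rw [List.getLast_append]
            exact hab)
          have h2 := ih hr (p' ++ [a]) (by simp) (by
            intro q hq
            simp only [List.head?_cons, Option.mem_def, Option.some.injEq] at hq
            subst hq
            rw [List.getLast_append]
            exact hab)
          simp only [List.cons_append, List.append_assoc, List.singleton_append, List.nil_append] at h1 h2
          rw [h1]
          by_cases hx : x = a
          · rw [if_pos hx, h2, mul_zero]; simp
          · rw [if_neg hx]; simp
    · rw [(P ((a, e) :: r)).supp _ hM]

/-- Main nonvanishing lemma. -/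
lemma Jlem : ∀ (r : List (α × Bool)) (a : α) (e : Bool), Rw ((a, e) :: r) →
    ∃ k : ℤ, 0 < k ∧
      (P ((a, e) :: r)).coef (mL ((a, e) :: r))
        = sg e * k * (P ((a, e) :: r)).coef ((mL ((a, e) :: r)).tail)
      ∧ (P ((a, e) :: r)).coef ((mL ((a, e) :: r)).tail) ≠ 0 := by
  intro r
  induction r with
  | nil =>
    intro a e _
    refine ⟨1, one_pos, ?_, ?_⟩
    · rw [mL_cons]
      simp only [List.map_nil, List.destutter'_nil, List.tail_cons]
      rw [P_cons, P_nil, E_mul_coef_cons _ _ _ _ _ (List.isChain_singleton a),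
        coef_nil_mul, one_coef, one_coef, E_coef]
      simp
    · rw [mL_cons]
      simp only [List.map_nil, List.destutter'_nil, List.tail_cons]
      rw [P_cons, P_nil, coef_nil_mul, one_coef, E_coef]
      simp
  | cons hd r' ih =>
    intro a e hL
    obtain ⟨b, e'⟩ := hd
    obtain ⟨hrel, hr⟩ := List.isChain_cons.1 hL
    obtain ⟨kr, hkr, hAr, hTr⟩ := ih b e' hr
    obtain ⟨t, hmr, hchain⟩ := destutter'_head (r'.map Prod.fst) b
    have hmr' : mL ((b, e') :: r') = b :: t := hmr
    by_cases hab : a = b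
    · -- same letter: signs must agree, run gets longer
      have he : e = e' := hrel (b, e') rfl (by rw [hab])
      subst he
      subst hab
      rw [mL_cons_cons_eq]
      -- tail coefficient transfers
      have hTtrans : (P ((a, e) :: (a, e) :: r')).coef ((mL ((a, e) :: r')).tail)
          = (P ((a, e) :: r')).coef ((mL ((a, e) :: r')).tail) := by
        rw [P_cons, hmr', List.tail_cons]
        match t, hchain with
        | [], _ => rw [coef_nil_mul, E_coef, if_pos rfl, one_mul]
        | y :: t', hch =>
          have hch' : (y :: t').Chain' (· ≠ ·) := (List.isChain_cons.1 hch).2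
          rw [E_mul_coef_cons _ _ _ _ _ hch']
          have hby : a ≠ y := (List.isChain_cons_cons.1 hch).1
          rw [if_neg (Ne.symm hby), add_zero]
      refine ⟨kr + 1, by omega, ?_, ?_⟩
      · -- head coefficient: A_L = A_r + sg e * T_r = sg e * (kr + 1) * T_r
        have hA : (P ((a, e) :: (a, e) :: r')).coef (mL ((a, e) :: r'))
            = (P ((a, e) :: r')).coef (mL ((a, e) :: r'))
              + sg e * (P ((a, e) :: r')).coef ((mL ((a, e) :: r')).tail) := by
          rw [P_cons, hmr', E_mul_coef_cons _ _ _ _ _ hchain, if_pos rfl, List.tail_cons]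
        rw [hA, hAr, hTtrans]
        ring
      · rw [hTtrans]
        exact hTr
    · -- new letter: run of length 1
      rw [mL_cons_cons_ne _ _ _ _ _ hab, List.tail_cons]
      have hchainA : (a :: mL ((b, e') :: r')).Chain' (· ≠ ·) := by
        rw [hmr']
        exact List.isChain_cons_cons.2 ⟨hab, hchain⟩
      have hA : (P ((a, e) :: (b, e') :: r')).coef (a :: mL ((b, e') :: r'))
          = sg e * (P ((b, e') :: r')).coef (mL ((b, e') :: r')) := by
        rw [P_cons, E_mul_coef_cons _ _ _ _ _ hchainA, if_pos rfl]
        have hz : (P ((b, e') :: r')).coef ([a] ++ mL ((b, e') :: r')) = 0 := by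
          refine Zstar _ hr [a] (by simp) ?_
          intro q hq
          simp only [List.head?_cons, Option.mem_def, Option.some.injEq] at hq
          subst hq
          simpa using hab
        simp only [List.singleton_append] at hz
        rw [hz, zero_add]
      have hT : (P ((a, e) :: (b, e') :: r')).coef (mL ((b, e') :: r'))
          = (P ((b, e') :: r')).coef (mL ((b, e') :: r')) := by
        rw [P_cons, hmr', E_mul_coef_cons _ _ _ _ _ hchain,
          if_neg (fun h => hab h.symm), add_zero]
      have hAne : (P ((b, e') :: r')).coef (mL ((b, e') :: r')) ≠ 0 := by
        rw [hAr]
        exact mul_ne_zero (mul_ne_zero (sg_ne_zero e') (by omega)) hTr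
      exact ⟨1, one_pos, by rw [hA, hT]; ring, by rw [hT]; exact hAne⟩


/-! ### Connection with the free group -/

lemma rw_reduce [DecidableEq α] (L : List (α × Bool)) : Rw (FreeGroup.reduce L) := by
  induction L with
  | nil => exact List.isChain_nil
  | cons hd tl ih =>
    rw [FreeGroup.reduce.cons]
    cases h : FreeGroup.reduce tl with
    | nil => exact List.isChain_singleton hd
    | cons hd2 tl2 =>
      rw [h] at ih
      dsimp only
      split_ifs with hcase
      · exact (List.isChain_cons.1 ih).2
      · refine List.isChain_cons_cons.2 ⟨?_, ih⟩
        intro h1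
        by_contra h2
        exact hcase ⟨h1, by
          cases hb : hd.2 <;> cases hb2 : hd2.2 <;> simp_all⟩

lemma rw_toWord [DecidableEq α] (x : FreeGroup α) : Rw x.toWord := by
  rw [← FreeGroup.reduce_toWord]
  exact rw_reduce _

/-- The Magnus homomorphism. -/
noncomputable def phi : FreeGroup α →* (MS α)ˣ := FreeGroup.lift fun a => U a

lemma phi_val (x : FreeGroup α) : ((phi x : (MS α)ˣ) : MS α) = P x.toWord := by
  conv_lhs => rw [← FreeGroup.mk_toWord (x := x)]
  rw [phi, FreeGroup.lift_mk]
  rw [← Units.coeHom_apply, map_list_prod, List.map_map, P]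
  congr 1
  refine List.map_congr_left fun p _ => ?_
  cases hb : p.2 <;> simp [Units.coeHom_apply, sg, hb, U_inv_val, U]

lemma phi_injective_aux (x : FreeGroup α)
    (h : ∀ l : List α, ((phi x : (MS α)ˣ) : MS α).coef l = (1 : MS α).coef l) : x = 1 := by
  by_contra hx
  have hne : x.toWord ≠ [] := fun hnil => hx (FreeGroup.toWord_eq_nil_iff.1 hnil)
  obtain ⟨⟨a, e⟩, r, hw⟩ := List.exists_cons_of_ne_nil hne
  obtain ⟨k, hk, hA, hT⟩ := Jlem r a e (by rw [← hw]; exact rw_toWord x)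
  obtain ⟨t, hmr, -⟩ := destutter'_head (r.map Prod.fst) a
  have hval := h (mL ((a, e) :: r))
  rw [phi_val, hw] at hval
  rw [hval] at hA
  rw [mL_cons, hmr, one_coef] at hA
  rw [mL_cons, hmr] at hT
  rw [if_neg (by simp)] at hA
  have hk0 : k ≠ 0 := ne_of_gt hk
  exact mul_ne_zero (mul_ne_zero (sg_ne_zero e) hk0) hT hA.symm

end MagnusAux

/-- Every free group is ω-solvable: the intersection of all terms of its
derived series is trivial. -/
theorem freeGroup_omegaSolvable (α : Type*) :
    ⨅ n : ℕ, derivedSeries (FreeGroup α) n = ⊥ := by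
  refine le_antisymm ?_ bot_le
  intro x hx
  rw [Subgroup.mem_iInf] at hx
  rw [Subgroup.mem_bot]
  have hmem : ∀ n, MagnusAux.phi (α := α) x ∈ derivedSeries (MagnusAux.MS α)ˣ n := fun n =>
    map_derivedSeries_le_derivedSeries (MagnusAux.phi (α := α)) n
      (Subgroup.mem_map.2 ⟨x, hx n, rfl⟩)
  have hK : ∀ n, MagnusAux.Req n ((MagnusAux.phi (α := α) x : (MagnusAux.MS α)ˣ) : MagnusAux.MS α) 1 :=
    fun n => MagnusAux.derivedSeries_le_K n (hmem n)
  refine MagnusAux.phi_injective_aux x fun l => ?_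
  exact hK (l.length + 1) l (Nat.lt_succ_self _)
end
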